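/- Let c_1, …, c_k, d_1, …, d_m ∈ ℝ^(2^n). Then the following are equivalent: (1) for all h ∈ cl Γ_n^*, if c_i·h ≥ 0 for all i ∈ {1,…,k} then d_j·h ≥ 0 for at least one j ∈ {1,…,m}; (2) there exist λ_1 ≥ 0, …, λ_m ≥ 0 with ∑_j λ_j = 1 such that for all h ∈ cl Γ_n^*, if c_i·h ≥ 0 for all i ∈ {1,…,k} then ∑_{j=1}^{m} λ_j·(d_j·h) ≥ 0. In other words, every (conditional) max information inequality valid over the almost entropic vectors follows from a single (conditional) linear information inequality. -/
import Mathlib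


/-- The marginal probability `q_α(v)` of the joint outcome `v` of the variables in `α`. -/
noncomputable def marginalProb {n N : ℕ} (p : Fin N → ℝ) (X : Fin n → Fin N → ℕ)
    (α : Finset (Fin n)) (v : {i // i ∈ α} → ℕ) : ℝ :=
  ∑ ω ∈ Finset.univ.filter (fun ω => ∀ i : {i // i ∈ α}, X i.1 ω = v i), p ω

/-- The base-2 Shannon entropy of the joint marginal distribution on `α`. -/
noncomputable def entropyOn {n N : ℕ} (p : Fin N → ℝ) (X : Fin n → Fin N → ℕ)
    (α : Finset (Fin n)) : ℝ :=
  (∑' v : ({i // i ∈ α} → ℕ), Real.negMulLog (marginalProb p X α v)) / Real.log 2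

/-- `h : Finset (Fin n) → ℝ` is entropic if it is the entropy profile of `n` jointly
distributed random variables on a nonempty finite probability space. -/
def IsEntropic (n : ℕ) (h : Finset (Fin n) → ℝ) : Prop :=
  ∃ (N : ℕ) (p : Fin N → ℝ) (X : Fin n → Fin N → ℕ), 0 < N ∧
    (∀ ω, 0 ≤ p ω) ∧ (∑ ω, p ω) = 1 ∧ ∀ α, h α = entropyOn p X α

/-- The closed convex cone `cl Γ_n^*` of almost entropic vectors. -/
def almostEntropic (n : ℕ) : Set (Finset (Fin n) → ℝ) :=
  closure {h | IsEntropic n h}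

namespace Stmt11Aux


open Finset Real

variable {n N : ℕ}

def supp (X : Fin n → Fin N → ℕ) (α : Finset (Fin n)) :
    Finset ({i // i ∈ α} → ℕ) :=
  Finset.univ.image (fun ω => fun i => X i.1 ω)

lemma marginal_eq_zero {p : Fin N → ℝ} {X : Fin n → Fin N → ℕ} {α : Finset (Fin n)}
    {v : {i // i ∈ α} → ℕ} (hv : v ∉ supp X α) : marginalProb p X α v = 0 := by
  unfold marginalProb
  rw [Finset.filter_false_of_mem, Finset.sum_empty]
  intro ω _ h
  have : (fun i : {i // i ∈ α} => X i.1 ω) = v := funext h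
  exact hv (this ▸ Finset.mem_image_of_mem _ (Finset.mem_univ ω))

lemma tsum_comp_marginal {p : Fin N → ℝ} {X : Fin n → Fin N → ℕ} {α : Finset (Fin n)}
    (g : ℝ → ℝ) (hg : g 0 = 0) :
    ∑' v : ({i // i ∈ α} → ℕ), g (marginalProb p X α v)
      = ∑ v ∈ supp X α, g (marginalProb p X α v) := by
  refine tsum_eq_sum fun v hv => ?_
  rw [marginal_eq_zero hv, hg]

lemma sum_marginal (p : Fin N → ℝ) (X : Fin n → Fin N → ℕ) (α : Finset (Fin n)) :
    ∑ v ∈ supp X α, marginalProb p X α v = ∑ ω, p ω := by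
  unfold marginalProb supp
  rw [← Finset.sum_fiberwise_of_maps_to
    (fun ω _ => Finset.mem_image_of_mem (fun ω => fun i : {i // i ∈ α} => X i.1 ω)
      (Finset.mem_univ ω)) p]
  refine Finset.sum_congr rfl fun v _ => ?_
  refine Finset.sum_congr (Finset.filter_congr fun ω _ => ?_) fun _ _ => rfl
  exact (funext_iff).symm

lemma entropyOn_eq (p : Fin N → ℝ) (X : Fin n → Fin N → ℕ) (α : Finset (Fin n)) :
    entropyOn p X α
      = (∑ v ∈ supp X α, Real.negMulLog (marginalProb p X α v)) / Real.log 2 := by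
  rw [entropyOn, tsum_comp_marginal _ Real.negMulLog_zero]



lemma pair_eq_iff (a b c : ℕ) : Nat.pair a b = c ↔ a = c.unpair.1 ∧ b = c.unpair.2 := by
  constructor
  · rintro rfl; simp
  · rintro ⟨rfl, rfl⟩; simp [Nat.pair_unpair]

variable {n N M : ℕ}

def valEquiv (α : Finset (Fin n)) :
    ({i // i ∈ α} → ℕ) ≃ ({i // i ∈ α} → ℕ) × ({i // i ∈ α} → ℕ) where
  toFun v := (fun i => (v i).unpair.1, fun i => (v i).unpair.2)
  invFun z := fun i => Nat.pair (z.1 i) (z.2 i)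
  left_inv v := by funext i; simp
  right_inv z := by refine Prod.ext ?_ ?_ <;> funext i <;> simp

section Prod

variable (p : Fin N → ℝ) (q : Fin M → ℝ) (X : Fin n → Fin N → ℕ) (Y : Fin n → Fin M → ℕ)

noncomputable def prodP : Fin (N * M) → ℝ :=
  fun ω => p (finProdFinEquiv.symm ω).1 * q (finProdFinEquiv.symm ω).2

def prodX : Fin n → Fin (N * M) → ℕ :=
  fun i ω => Nat.pair (X i (finProdFinEquiv.symm ω).1) (Y i (finProdFinEquiv.symm ω).2)

lemma sum_prodP : ∑ ω, prodP p q ω = (∑ ω, p ω) * (∑ ω, q ω) := by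
  rw [← Equiv.sum_comp (finProdFinEquiv : Fin N × Fin M ≃ Fin (N * M)) (prodP p q),
    Finset.sum_mul_sum, Fintype.sum_prod_type]
  refine Finset.sum_congr rfl fun a _ => Finset.sum_congr rfl fun b _ => ?_
  simp [prodP]

lemma marginal_prod (α : Finset (Fin n)) (v : {i // i ∈ α} → ℕ) :
    marginalProb (prodP p q) (prodX X Y) α v
      = marginalProb p X α (fun i => (v i).unpair.1)
        * marginalProb q Y α (fun i => (v i).unpair.2) := by
  unfold marginalProb
  rw [Finset.sum_filter, Finset.sum_filter, Finset.sum_filter,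
    ← Equiv.sum_comp (finProdFinEquiv : Fin N × Fin M ≃ Fin (N * M)), Finset.sum_mul_sum,
    Fintype.sum_prod_type]
  refine Finset.sum_congr rfl fun a _ => Finset.sum_congr rfl fun b _ => ?_
  have hP : (∀ i : {i // i ∈ α}, prodX X Y i.1 (finProdFinEquiv (a, b)) = v i)
      ↔ ((∀ i : {i // i ∈ α}, X i.1 a = (v i).unpair.1)
          ∧ (∀ i : {i // i ∈ α}, Y i.1 b = (v i).unpair.2)) := by
    unfold prodX
    simp only [Equiv.symm_apply_apply]
    rw [← forall_and]
    exact forall_congr' fun i => pair_eq_iff _ _ _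
  have hr : prodP p q (finProdFinEquiv (a, b)) = p a * q b := by
    simp [prodP]
  rw [hr, if_congr hP rfl rfl, ite_zero_mul_ite_zero]

lemma entropy_tsum_prod {α : Finset (Fin n)} (hp : ∑ ω, p ω = 1) (hq : ∑ ω, q ω = 1) :
    ∑' v : ({i // i ∈ α} → ℕ), Real.negMulLog (marginalProb (prodP p q) (prodX X Y) α v)
      = (∑' v : ({i // i ∈ α} → ℕ), Real.negMulLog (marginalProb p X α v))
        + ∑' v : ({i // i ∈ α} → ℕ), Real.negMulLog (marginalProb q Y α v) := by
  have key : ∀ v, Real.negMulLog (marginalProb (prodP p q) (prodX X Y) α v)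
      = (fun z : ({i // i ∈ α} → ℕ) × ({i // i ∈ α} → ℕ) =>
          Real.negMulLog (marginalProb p X α z.1 * marginalProb q Y α z.2)) (valEquiv α v) :=
    fun v => by rw [marginal_prod]; rfl
  rw [tsum_congr key, Equiv.tsum_eq (valEquiv α)
    (fun z => Real.negMulLog (marginalProb p X α z.1 * marginalProb q Y α z.2))]
  have hsupp : ∀ z : ({i // i ∈ α} → ℕ) × ({i // i ∈ α} → ℕ),
      z ∉ supp X α ×ˢ supp Y α →
      Real.negMulLog (marginalProb p X α z.1 * marginalProb q Y α z.2) = 0 := by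
    intro z hz
    rw [Finset.mem_product] at hz
    push_neg at hz
    by_cases h : z.1 ∈ supp X α
    · rw [marginal_eq_zero (hz h), mul_zero, Real.negMulLog_zero]
    · rw [marginal_eq_zero h, zero_mul, Real.negMulLog_zero]
  rw [tsum_eq_sum hsupp, Finset.sum_product,
    tsum_comp_marginal _ Real.negMulLog_zero, tsum_comp_marginal _ Real.negMulLog_zero]
  have : ∀ u ∈ supp X α, ∀ w ∈ supp Y α,
      Real.negMulLog (marginalProb p X α u * marginalProb q Y α w)
      = marginalProb q Y α w * Real.negMulLog (marginalProb p X α u)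
        + marginalProb p X α u * Real.negMulLog (marginalProb q Y α w) := by
    intro u _ w _; rw [Real.negMulLog_mul]
  calc ∑ u ∈ supp X α, ∑ w ∈ supp Y α,
        Real.negMulLog (marginalProb p X α u * marginalProb q Y α w)
      = ∑ u ∈ supp X α, ((∑ w ∈ supp Y α, marginalProb q Y α w)
            * Real.negMulLog (marginalProb p X α u)
          + marginalProb p X α u * ∑ w ∈ supp Y α, Real.negMulLog (marginalProb q Y α w)) := by
        refine Finset.sum_congr rfl fun u hu => ?_
        rw [Finset.sum_congr rfl (this u hu), Finset.sum_add_distrib, ← Finset.sum_mul,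
          ← Finset.mul_sum]
    _ = _ := by
        rw [Finset.sum_add_distrib, sum_marginal q Y α, hq]
        simp only [one_mul]
        rw [← Finset.sum_mul, sum_marginal p X α, hp, one_mul]

end Prod

lemma isEntropic_add {n : ℕ} {h₁ h₂ : Finset (Fin n) → ℝ}
    (e₁ : IsEntropic n h₁) (e₂ : IsEntropic n h₂) : IsEntropic n (h₁ + h₂) := by
  obtain ⟨N, p, X, hN, hp0, hp1, hH⟩ := e₁
  obtain ⟨M, q, Y, hM, hq0, hq1, hG⟩ := e₂
  refine ⟨N * M, prodP p q, prodX X Y, Nat.mul_pos hN hM, ?_, ?_, ?_⟩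
  · intro ω; exact mul_nonneg (hp0 _) (hq0 _)
  · rw [sum_prodP, hp1, hq1, one_mul]
  · intro α
    have := entropy_tsum_prod p q X Y (α := α) hp1 hq1
    show h₁ α + h₂ α = _
    rw [hH, hG, entropyOn, entropyOn, entropyOn, this, add_div]

lemma isEntropic_zero (n : ℕ) : IsEntropic n 0 := by
  refine ⟨1, fun _ => 1, fun _ _ => 0, one_pos, fun _ => zero_le_one, by simp, fun α => ?_⟩
  show (0 : ℝ) = _
  rw [entropyOn]
  have : ∀ v : {i // i ∈ α} → ℕ,
      Real.negMulLog (marginalProb (fun _ : Fin 1 => (1:ℝ)) (fun _ _ => 0) α v) = 0 := by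
    intro v
    unfold marginalProb
    rcases Finset.eq_empty_or_nonempty
      (Finset.univ.filter (fun ω : Fin 1 => ∀ i : {i // i ∈ α}, (0:ℕ) = v i)) with h | h
    · rw [h, Finset.sum_empty, Real.negMulLog_zero]
    · have : (Finset.univ.filter (fun ω : Fin 1 => ∀ i : {i // i ∈ α}, (0:ℕ) = v i))
          = Finset.univ := by
        obtain ⟨ω₀, hω₀⟩ := h
        refine Finset.eq_univ_of_forall fun ω => ?_
        rw [Finset.mem_filter] at hω₀ ⊢
        exact ⟨Finset.mem_univ _, hω₀.2⟩
      rw [this]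
      simp
  rw [tsum_congr this, tsum_zero, zero_div]

noncomputable def binH (μ : ℝ) : ℝ :=
  (Real.negMulLog μ + Real.negMulLog (1 - μ)) / Real.log 2

lemma binH_zero : binH 0 = 0 := by simp [binH]

section Mix

variable {n N : ℕ} (μ : ℝ) (p : Fin N → ℝ) (X : Fin n → Fin N → ℕ) {α : Finset (Fin n)}

noncomputable def mixP : Fin (N + 1) → ℝ := Fin.snoc (fun ω => μ * p ω) (1 - μ)

def mixX : Fin n → Fin (N + 1) → ℕ := fun i => Fin.snoc (fun ω => X i ω + 1) 0

lemma sum_mixP : ∑ ω, mixP μ p ω = μ * (∑ ω, p ω) + (1 - μ) := by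
  rw [Fin.sum_univ_castSucc]
  simp [mixP, Finset.mul_sum]

def succF (α : Finset (Fin n)) : ({i // i ∈ α} → ℕ) → ({i // i ∈ α} → ℕ) :=
  fun u i => u i + 1

lemma succF_inj : Function.Injective (succF α) := by
  intro u w h
  funext i
  have := congrFun h i
  simpa [succF] using this

lemma entropyOn_empty (hp : ∑ ω, p ω = 1) : entropyOn p X (∅ : Finset (Fin n)) = 0 := by
  haveI : IsEmpty {i // i ∈ (∅ : Finset (Fin n))} :=
    ⟨fun i => absurd i.2 (Finset.notMem_empty i.1)⟩
  rw [entropyOn, tsum_eq_single (fun i => (0:ℕ))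
    (fun b hb => absurd (Subsingleton.elim b _) hb)]
  have : marginalProb p X ∅ (fun i => (0:ℕ)) = 1 := by
    unfold marginalProb
    rw [Finset.filter_true_of_mem (fun ω _ => fun i => isEmptyElim i), hp]
  rw [this, Real.negMulLog_one, zero_div]

lemma mix_marginal_succ (hα : α.Nonempty) (v : {i // i ∈ α} → ℕ) :
    marginalProb (mixP μ p) (mixX X) α (succF α v) = μ * marginalProb p X α v := by
  obtain ⟨i₀, hi₀⟩ := hα
  unfold marginalProb
  rw [Finset.sum_filter, Finset.sum_filter, Fin.sum_univ_castSucc]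
  have hlast : ¬ (∀ i : {i // i ∈ α}, mixX X i.1 (Fin.last N) = succF α v i) := by
    intro h
    have := h ⟨i₀, hi₀⟩
    simp [mixX, succF] at this
  rw [if_neg hlast, add_zero, Finset.mul_sum]
  refine Finset.sum_congr rfl fun ω _ => ?_
  have hcond : (∀ i : {i // i ∈ α}, mixX X i.1 (Fin.castSucc ω) = succF α v i)
      ↔ (∀ i : {i // i ∈ α}, X i.1 ω = v i) := by
    refine forall_congr' fun i => ?_
    simp [mixX, succF]
  rw [if_congr hcond rfl rfl]
  have : mixP μ p (Fin.castSucc ω) = μ * p ω := by simp [mixP]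
  rw [this, mul_ite, mul_zero]

lemma mix_marginal_zero (hα : α.Nonempty) :
    marginalProb (mixP μ p) (mixX X) α (fun _ => 0) = 1 - μ := by
  obtain ⟨i₀, hi₀⟩ := hα
  unfold marginalProb
  rw [Finset.sum_filter, Fin.sum_univ_castSucc]
  have h1 : ∀ ω : Fin N,
      (if (∀ i : {i // i ∈ α}, mixX X i.1 (Fin.castSucc ω) = 0) then mixP μ p (Fin.castSucc ω)
        else 0) = 0 := by
    intro ω
    rw [if_neg]
    intro h
    have := h ⟨i₀, hi₀⟩
    simp [mixX] at this
  rw [Finset.sum_congr rfl fun ω _ => h1 ω, Finset.sum_const_zero, zero_add,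
    if_pos (fun i => by simp [mixX])]
  simp [mixP]

lemma mix_marginal_other (v : {i // i ∈ α} → ℕ) (h0 : ∃ i, v i = 0)
    (hne : v ≠ fun _ => 0) :
    marginalProb (mixP μ p) (mixX X) α v = 0 := by
  obtain ⟨i₁, hi₁⟩ := h0
  unfold marginalProb
  rw [Finset.sum_filter, Fin.sum_univ_castSucc]
  have h1 : ∀ ω : Fin N,
      (if (∀ i : {i // i ∈ α}, mixX X i.1 (Fin.castSucc ω) = v i) then mixP μ p (Fin.castSucc ω)
        else 0) = 0 := by
    intro ω
    rw [if_neg]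
    intro h
    have := h i₁
    rw [hi₁] at this
    simp [mixX] at this
  rw [Finset.sum_congr rfl fun ω _ => h1 ω, Finset.sum_const_zero, zero_add, if_neg, ]
  intro h
  exact hne (funext fun i => (h i).symm ▸ by simp [mixX])

lemma entropy_mix (hα : α.Nonempty) (hp : ∑ ω, p ω = 1) :
    entropyOn (mixP μ p) (mixX X) α = μ * entropyOn p X α + binH μ := by
  classical
  obtain ⟨i₀, hi₀⟩ := hα
  set m' := marginalProb (mixP μ p) (mixX X) α with hm'
  set W : Finset ({i // i ∈ α} → ℕ) :=
    (supp X α).image (succF α) ∪ {fun _ => 0} with hW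
  have hsupport : ∀ v ∉ W, Real.negMulLog (m' v) = 0 := by
    intro v hv
    rw [hW, Finset.mem_union, Finset.mem_singleton] at hv
    push_neg at hv
    by_cases hz : ∀ i, v i ≠ 0
    · have hv' : v = succF α (fun i => v i - 1) := by
        funext i
        have := hz i
        simp only [succF]
        omega
      have : (fun i => v i - 1) ∉ supp X α := by
        intro hmem
        exact hv.1 (hv' ▸ Finset.mem_image_of_mem _ hmem)
      rw [hm', hv', mix_marginal_succ μ p X ⟨i₀, hi₀⟩, marginal_eq_zero this, mul_zero,
        Real.negMulLog_zero]
    · push_neg at hz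
      rw [hm', mix_marginal_other μ p X _ hz hv.2, Real.negMulLog_zero]
  have htsum : ∑' v, Real.negMulLog (m' v) = ∑ v ∈ W, Real.negMulLog (m' v) :=
    tsum_eq_sum hsupport
  have hdisj : Disjoint ((supp X α).image (succF α)) ({(fun _ => 0 : {i // i ∈ α} → ℕ)}) := by
    rw [Finset.disjoint_singleton_right]
    intro hmem
    obtain ⟨u, _, hu⟩ := Finset.mem_image.mp hmem
    have := congrFun hu ⟨i₀, hi₀⟩
    simp [succF] at this
  have hsum : ∑ v ∈ W, Real.negMulLog (m' v)
      = ∑ u ∈ supp X α, Real.negMulLog (m' (succF α u)) + Real.negMulLog (m' (fun _ => 0)) := by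
    rw [hW, Finset.sum_union hdisj, Finset.sum_image (fun u _ w _ h => succF_inj h),
      Finset.sum_singleton]
  have hterm : ∀ u ∈ supp X α, Real.negMulLog (m' (succF α u))
      = marginalProb p X α u * Real.negMulLog μ + μ * Real.negMulLog (marginalProb p X α u) := by
    intro u _
    rw [hm', mix_marginal_succ μ p X ⟨i₀, hi₀⟩, Real.negMulLog_mul]
  have hzero : Real.negMulLog (m' (fun _ => 0)) = Real.negMulLog (1 - μ) := by
    rw [hm', mix_marginal_zero μ p X ⟨i₀, hi₀⟩]
  rw [entropyOn, htsum, hsum, Finset.sum_congr rfl hterm, Finset.sum_add_distrib,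
    ← Finset.sum_mul, sum_marginal, hp, one_mul, ← Finset.mul_sum, hzero,
    ← tsum_comp_marginal _ Real.negMulLog_zero, entropyOn, binH]
  ring

end Mix

lemma isEntropic_mix {n : ℕ} {h : Finset (Fin n) → ℝ} (e : IsEntropic n h) {μ : ℝ}
    (h0 : 0 ≤ μ) (h1 : μ ≤ 1) :
    IsEntropic n (fun α => μ * h α + if α = ∅ then 0 else binH μ) := by
  obtain ⟨N, p, X, hN, hp0, hp1, hH⟩ := e
  refine ⟨N + 1, mixP μ p, mixX X, Nat.succ_pos _, ?_, ?_, ?_⟩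
  · intro ω
    refine Fin.lastCases ?_ ?_ ω
    · simp [mixP]; linarith
    · intro i; simp [mixP]; exact mul_nonneg h0 (hp0 i)
  · rw [sum_mixP, hp1]; ring
  · intro α
    show μ * h α + (if α = ∅ then 0 else binH μ) = _
    by_cases hαe : α = ∅
    · subst hαe
      have h₁ : entropyOn (mixP μ p) (mixX X) (∅ : Finset (Fin n)) = 0 :=
        entropyOn_empty _ _ (by rw [sum_mixP, hp1]; ring)
      have h₂ : h ∅ = 0 := by rw [hH, entropyOn_empty _ _ hp1]
      simp [h₁, h₂]
    · rw [if_neg hαe, entropy_mix μ p X (Finset.nonempty_iff_ne_empty.mpr hαe) hp1, hH]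

section Closure

variable {n : ℕ}

def entMonoid (n : ℕ) : AddSubmonoid (Finset (Fin n) → ℝ) where
  carrier := {h | IsEntropic n h}
  add_mem' := fun ha hb => isEntropic_add ha hb
  zero_mem' := isEntropic_zero n

lemma zero_mem_ae : (0 : Finset (Fin n) → ℝ) ∈ almostEntropic n :=
  subset_closure (isEntropic_zero n)

lemma add_mem_ae {a b : Finset (Fin n) → ℝ} (ha : a ∈ almostEntropic n)
    (hb : b ∈ almostEntropic n) : a + b ∈ almostEntropic n :=
  (entMonoid n).topologicalClosure.add_mem ha hb

lemma isEntropic_nsmul (k : ℕ) {h : Finset (Fin n) → ℝ} (e : IsEntropic n h) :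
    IsEntropic n ((k + 1) • h) := by
  induction k with
  | zero => simpa using e
  | succ k ih =>
    have : (k + 1 + 1) • h = (k + 1) • h + h := by rw [add_smul, one_smul]
    rw [this]
    exact isEntropic_add ih e

lemma smul_mem_ae_of_entropic {μ : ℝ} (h0 : 0 ≤ μ) (h1 : μ ≤ 1)
    {h : Finset (Fin n) → ℝ} (e : IsEntropic n h) : μ • h ∈ almostEntropic n := by
  have hμk : ∀ k : ℕ, IsEntropic n
      (fun α => μ * h α + if α = ∅ then 0 else binH (μ / (k + 1))) := by
    intro k
    have hk0 : (0:ℝ) < (k:ℝ) + 1 := by positivity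
    have hmem := isEntropic_mix (isEntropic_nsmul k e)
      (μ := μ / (k + 1)) (by positivity) (le_trans (by
        rw [div_le_iff₀ hk0]; nlinarith) le_rfl)
    have hfun : (fun α => μ * h α + if α = ∅ then 0 else binH (μ / (↑k + 1)))
        = (fun α => μ / (↑k + 1) * ((k + 1) • h) α
            + if α = ∅ then 0 else binH (μ / (↑k + 1))) := by
      funext α
      congr 1
      have hsm : ((k + 1) • h) α = ((k:ℝ) + 1) * h α := by
        show (k + 1) • h α = _
        rw [nsmul_eq_mul]
        push_cast
        ring
      rw [hsm]
      field_simp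
    rw [hfun]
    exact hmem
  have htend : Filter.Tendsto
      (fun k : ℕ => (fun α => μ * h α + if α = ∅ then 0 else binH (μ / (k + 1))))
      Filter.atTop (nhds (μ • h)) := by
    rw [tendsto_pi_nhds]
    intro α
    have hμh : (μ • h) α = μ * h α := rfl
    rw [hμh]
    by_cases hαe : α = ∅
    · simp only [hαe, if_true]
      simpa using tendsto_const_nhds
    · simp only [hαe, if_false]
      have hb : Continuous binH := by
        unfold binH
        exact ((Real.continuous_negMulLog).add
          ((Real.continuous_negMulLog).comp (continuous_const.sub continuous_id))).div_const _
      have hdiv : Filter.Tendsto (fun k : ℕ => μ / ((k:ℝ) + 1)) Filter.atTop (nhds 0) := by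
        have h2 := (tendsto_const_div_atTop_nhds_zero_nat μ).comp
          (Filter.tendsto_add_atTop_nat 1)
        have h2' : Filter.Tendsto (fun k : ℕ => μ / ((k + 1 : ℕ) : ℝ)) Filter.atTop (nhds 0) :=
          h2
        have h3 : (fun k : ℕ => μ / ((k + 1 : ℕ) : ℝ)) = fun k : ℕ => μ / ((k:ℝ) + 1) := by
          funext k; push_cast; ring
        rwa [h3] at h2' 
      have : Filter.Tendsto (fun k : ℕ => binH (μ / ((k:ℝ) + 1))) Filter.atTop (nhds 0) := by
        have := (hb.tendsto 0).comp hdiv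
        rwa [binH_zero] at this
      have := tendsto_const_nhds (α := ℕ) (f := Filter.atTop) (x := μ * h α) |>.add this
      simpa using this
  exact mem_closure_of_tendsto htend (Filter.Eventually.of_forall fun k => hμk k)

lemma smul_mem_ae {μ : ℝ} (h0 : 0 ≤ μ) (h1 : μ ≤ 1)
    {h : Finset (Fin n) → ℝ} (hh : h ∈ almostEntropic n) : μ • h ∈ almostEntropic n := by
  have := map_mem_closure (continuous_const_smul μ) hh
    (fun x hx => smul_mem_ae_of_entropic h0 h1 hx)
  rwa [show closure (almostEntropic n) = almostEntropic n from isClosed_closure.closure_eq]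
    at this

lemma smul_mem_ae' {t : ℝ} (ht : 0 ≤ t) {h : Finset (Fin n) → ℝ}
    (hh : h ∈ almostEntropic n) : t • h ∈ almostEntropic n := by
  have key : ∀ (k : ℕ) (s : ℝ), 0 ≤ s → s ≤ k → s • h ∈ almostEntropic n := by
    intro k
    induction k with
    | zero =>
      intro s hs0 hs1
      have : s = 0 := le_antisymm (by exact_mod_cast hs1) hs0
      rw [this, zero_smul]
      exact zero_mem_ae
    | succ k ih =>
      intro s hs0 hs1
      by_cases hle : s ≤ 1
      · exact smul_mem_ae hs0 hle hh
      · push_neg at hle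
        have h1 : s - 1 ≤ k := by push_cast at hs1 ⊢; linarith
        have := ih (s - 1) (by linarith) h1
        have heq : s • h = (s - 1) • h + (1:ℝ) • h := by
          rw [← add_smul]; ring_nf
        rw [heq]
        exact add_mem_ae this (by rwa [one_smul])
  exact key ⌈t⌉₊ t ht (Nat.le_ceil t)

lemma convex_ae : Convex ℝ (almostEntropic n) := by
  intro x hx y hy a b ha hb hab
  exact add_mem_ae (smul_mem_ae ha (by linarith) hx) (smul_mem_ae hb (by linarith) hy)

end Closure

lemma dot_add_smul {n : ℕ} (w : Finset (Fin n) → ℝ) (a b : ℝ)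
    (x y : Finset (Fin n) → ℝ) :
    ∑ α, w α * (a • x + b • y) α = a * ∑ α, w α * x α + b * ∑ α, w α * y α := by
  rw [Finset.mul_sum, Finset.mul_sum, ← Finset.sum_add_distrib]
  refine Finset.sum_congr rfl fun α _ => ?_
  simp only [Pi.add_apply, Pi.smul_apply, smul_eq_mul]
  ring

lemma dot_smul {n : ℕ} (w : Finset (Fin n) → ℝ) (a : ℝ) (x : Finset (Fin n) → ℝ) :
    ∑ α, w α * (a • x) α = a * ∑ α, w α * x α := by
  rw [Finset.mul_sum]
  refine Finset.sum_congr rfl fun α _ => ?_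
  simp only [Pi.smul_apply, smul_eq_mul]
  ring

end Stmt11Aux


open Stmt11Aux in
/-- Theorem 4.13: a conditional max information inequality is valid over
the almost-entropic cone `cl Γ_n^*` iff some convex combination of its disjuncts yields
a valid conditional linear information inequality. -/
theorem stmt11 (n : ℕ) (hn : 1 ≤ n) (k m : ℕ) (hm : 0 < m)
    (c : Fin k → Finset (Fin n) → ℝ) (d : Fin m → Finset (Fin n) → ℝ) :
    (∀ h ∈ almostEntropic n,
        (∀ i : Fin k, 0 ≤ ∑ α, c i α * h α) →
        ∃ j : Fin m, 0 ≤ ∑ α, d j α * h α) ↔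
    (∃ lam : Fin m → ℝ, (∀ j, 0 ≤ lam j) ∧ (∑ j, lam j) = 1 ∧
      ∀ h ∈ almostEntropic n,
        (∀ i : Fin k, 0 ≤ ∑ α, c i α * h α) →
        0 ≤ ∑ j, lam j * ∑ α, d j α * h α) := by
  constructor
  · -- hard direction
    intro H1
    -- the linear map assembling the d-dot-products
    set T : (Finset (Fin n) → ℝ) →ₗ[ℝ] (Fin m → ℝ) :=
      { toFun := fun h j => ∑ α, d j α * h α
        map_add' := by
          intro x y
          funext j
          simp [mul_add, Finset.sum_add_distrib]
        map_smul' := by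
          intro r x
          funext j
          simp only [Pi.smul_apply, smul_eq_mul, RingHom.id_apply, Finset.mul_sum]
          refine Finset.sum_congr rfl fun α _ => ?_
          ring } with hT
    set K : Set (Finset (Fin n) → ℝ) :=
      {h | h ∈ almostEntropic n ∧ ∀ i : Fin k, 0 ≤ ∑ α, c i α * h α} with hK
    have hKconv : Convex ℝ K := by
      intro x hx y hy a b ha hb hab
      refine ⟨convex_ae hx.1 hy.1 ha hb hab, fun i => ?_⟩
      rw [dot_add_smul]
      have := hx.2 i
      have := hy.2 i
      positivity
    have hK0 : (0 : Finset (Fin n) → ℝ) ∈ K := ⟨zero_mem_ae, fun i => by simp⟩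
    have hKcone : ∀ h ∈ K, ∀ r : ℝ, 0 ≤ r → r • h ∈ K := by
      intro h hh r hr
      refine ⟨smul_mem_ae' hr hh.1, fun i => ?_⟩
      rw [dot_smul]
      exact mul_nonneg hr (hh.2 i)
    set s : Set (Fin m → ℝ) := {x | ∀ j, x j < 0} with hs
    have hs_open : IsOpen s := by
      have : s = ⋂ j, (fun x : Fin m → ℝ => x j) ⁻¹' Set.Iio 0 := by
        ext x; simp [hs, Set.mem_iInter]
      rw [this]
      exact isOpen_iInter_of_finite fun j => isOpen_Iio.preimage (continuous_apply j)
    have hs_conv : Convex ℝ s := by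
      intro x hx y hy a b ha hb hab j
      simp only [Pi.add_apply, Pi.smul_apply, smul_eq_mul]
      rcases lt_or_eq_of_le ha with ha' | ha'
      · have h1 : a * x j < 0 := mul_neg_of_pos_of_neg ha' (hx j)
        have h2 : b * y j ≤ 0 := mul_nonpos_of_nonneg_of_nonpos hb (le_of_lt (hy j))
        linarith
      · have hb1 : b = 1 := by linarith
        rw [← ha', hb1]
        simpa using hy j
    have ht_conv : Convex ℝ (T '' K) := hKconv.linear_image T
    have hdisj : Disjoint s (T '' K) := by
      rw [Set.disjoint_left]
      rintro x hxs ⟨h, hhK, rfl⟩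
      obtain ⟨j, hj⟩ := H1 h hhK.1 hhK.2
      exact absurd hj (not_le.mpr (hxs j))
    obtain ⟨f, u, hfs, hft⟩ := geometric_hahn_banach_open hs_conv hs_open ht_conv hdisj
    set μ : Fin m → ℝ := fun j => f (Pi.single j 1) with hμ
    have hf_eq : ∀ x : Fin m → ℝ, f x = ∑ j, x j * μ j := by
      intro x
      have hx : x = ∑ j, x j • (Pi.single j 1 : Fin m → ℝ) := by
        rw [← Finset.univ_sum_single x]
        refine Finset.sum_congr rfl fun j _ => ?_
        funext l
        by_cases h : l = j <;> simp [Pi.single_apply, h]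
      calc f x = f (∑ j, x j • (Pi.single j 1 : Fin m → ℝ)) := by rw [← hx]
        _ = ∑ j, x j * μ j := by
            rw [map_sum]
            exact Finset.sum_congr rfl fun j _ => by rw [map_smul, smul_eq_mul]
    have hu0 : u ≤ 0 := by
      have := hft (T 0) ⟨0, hK0, rfl⟩
      rwa [map_zero, map_zero] at this
    have hμ_nonneg : ∀ j, 0 ≤ μ j := by
      intro j
      by_contra hneg
      push_neg at hneg
      set t₀ : ℝ := max 0 ((u + ∑ l, μ l) / (-μ j)) with ht₀
      have ht₀0 : 0 ≤ t₀ := le_max_left _ _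
      set a : Fin m → ℝ := fun l => if l = j then -1 - t₀ else -1 with ha
      have ha_s : a ∈ s := by
        intro l
        by_cases h : l = j <;> simp [ha, h] <;> linarith
      have hfa : f a = -(∑ l, μ l) - t₀ * μ j := by
        rw [hf_eq]
        have : ∀ l, a l * μ l = -μ l + (if l = j then -t₀ * μ l else 0) := by
          intro l
          by_cases h : l = j <;> simp [ha, h] <;> ring
        rw [Finset.sum_congr rfl fun l _ => this l, Finset.sum_add_distrib,
          Finset.sum_ite_eq' Finset.univ j (fun l => -t₀ * μ l)]
        simp [Finset.sum_neg_distrib]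
        ring
      have hge : u + (∑ l, μ l) ≤ t₀ * (-μ j) := by
        have h1 : (u + ∑ l, μ l) / (-μ j) ≤ t₀ := le_max_right _ _
        have h2 : (0:ℝ) < -μ j := by linarith
        exact (div_le_iff₀ h2).mp h1
      have := hfs a ha_s
      rw [hfa] at this
      nlinarith
    have hfT : ∀ h ∈ K, 0 ≤ f (T h) := by
      intro h hh
      by_contra hneg
      push_neg at hneg
      set r : ℝ := (u - 1) / f (T h) with hr
      have hr0 : 0 < r := div_pos_of_neg_of_neg (by linarith) hneg
      have hmem := hft (T (r • h)) ⟨r • h, hKcone h hh r hr0.le, rfl⟩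
      rw [map_smul, map_smul, smul_eq_mul, hr, div_mul_cancel₀ _ (ne_of_lt hneg)] at hmem
      linarith
    have hSnn : 0 ≤ ∑ j, μ j := Finset.sum_nonneg fun j _ => hμ_nonneg j
    have hSpos : 0 < ∑ j, μ j := by
      rcases lt_or_eq_of_le hSnn with h | h
      · exact h
      · exfalso
        have hall : ∀ j ∈ Finset.univ, μ j = 0 :=
          (Finset.sum_eq_zero_iff_of_nonneg fun j _ => hμ_nonneg j).mp h.symm
        have hconst : (fun _ : Fin m => (-1:ℝ)) ∈ s := fun j => by norm_num
        have := hfs _ hconst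
        rw [hf_eq] at this
        have hz : ∑ j, (fun _ : Fin m => (-1:ℝ)) j * μ j = 0 :=
          Finset.sum_eq_zero fun j hj => by rw [hall j hj]; ring
        rw [hz] at this
        linarith
    refine ⟨fun j => μ j / (∑ l, μ l), fun j => div_nonneg (hμ_nonneg j) hSnn, ?_, ?_⟩
    · rw [← Finset.sum_div, div_self (ne_of_gt hSpos)]
    · intro h hmem hc
      have hhK : h ∈ K := ⟨hmem, hc⟩
      have hkey := hfT h hhK
      have heq : ∑ j, (μ j / (∑ l, μ l)) * (∑ α, d j α * h α) = f (T h) / (∑ l, μ l) := by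
        have hTh : ∀ j, (T h) j = ∑ α, d j α * h α := fun j => rfl
        rw [hf_eq, Finset.sum_div]
        refine Finset.sum_congr rfl fun j _ => ?_
        rw [hTh]
        ring
      rw [heq]
      exact div_nonneg hkey hSnn
  · -- easy direction
    rintro ⟨lam, hl0, hl1, hval⟩ h hmem hc
    by_contra hcon
    push_neg at hcon
    have hx := hval h hmem hc
    obtain ⟨j0, hj0⟩ : ∃ j0, 0 < lam j0 := by
      by_contra h'
      push_neg at h'
      have : ∀ j ∈ Finset.univ, lam j = 0 := fun j _ => le_antisymm (h' j) (hl0 j)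
      rw [Finset.sum_congr rfl this, Finset.sum_const_zero] at hl1
      norm_num at hl1
    have hlt : ∑ j, lam j * ∑ α, d j α * h α < ∑ j : Fin m, (0:ℝ) := by
      refine Finset.sum_lt_sum (fun j _ => mul_nonpos_of_nonneg_of_nonpos (hl0 j)
        (le_of_lt (hcon j))) ⟨j0, Finset.mem_univ _, ?_⟩
      exact mul_neg_of_pos_of_neg hj0 (hcon j0)
    rw [Finset.sum_const_zero] at hlt
    linarith
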